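/- The function ψ(z) = e^{-z²/2} z (4z⁴-5)/(2z²+1) satisfies ψ''(z) + (V(z) + 9)ψ(z) = 0 where V(z) = -z² - 2 - 8/(2z²+1) + 16/(2z²+1)². -/

import Mathlib

/-!
Writing `ψ = exp (-z²/2) · u` with the rational function `u z = z (4z⁴ - 5) / (2z² + 1)`,
the Schrödinger operator is conjugated into `u'' - 2 z u' + (z² - 1 + V + 9) u`, a rational
expression in `z` that vanishes identically once `u'` and `u''` are computed.
-/

open Real

lemma hasDerivAt_exp_neg_sq_div_two_mul {u : ℝ → ℝ} {u' z : ℝ} (hu : HasDerivAt u u' z) :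
    HasDerivAt (fun x => exp (-x ^ 2 / 2) * u x) (exp (-z ^ 2 / 2) * (u' - z * u z)) z := by
  have hexp : HasDerivAt (fun x : ℝ => exp (-x ^ 2 / 2)) (exp (-z ^ 2 / 2) * -z) z :=
    ((hasDerivAt_pow 2 z).neg.div_const 2).exp.congr_deriv <| by
      simp only [Pi.neg_apply, Nat.cast_ofNat, Nat.add_one_sub_one, pow_one]
      ring
  exact (hexp.mul hu).congr_deriv (by ring)

lemma deriv_deriv_exp_neg_sq_div_two_mul {u u₁ : ℝ → ℝ} {u₂ z : ℝ}
    (hu : ∀ x, HasDerivAt u (u₁ x) x) (hu₁ : HasDerivAt u₁ u₂ z) :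
    deriv (deriv fun x => exp (-x ^ 2 / 2) * u x) z =
      exp (-z ^ 2 / 2) * (u₂ - 2 * z * u₁ z + (z ^ 2 - 1) * u z) := by
  have hderiv : deriv (fun x => exp (-x ^ 2 / 2) * u x) =
      fun x => exp (-x ^ 2 / 2) * (u₁ x - x * u x) :=
    funext fun x => (hasDerivAt_exp_neg_sq_div_two_mul (hu x)).deriv
  rw [hderiv]
  have hv : HasDerivAt (fun x => u₁ x - x * u x) (u₂ - (u z + z * u₁ z)) z :=
    (hu₁.sub ((hasDerivAt_id' z).mul (hu z))).congr_deriv (by ring)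
  rw [(hasDerivAt_exp_neg_sq_div_two_mul hv).deriv]
  ring

lemma hasDerivAt_anharmonic_factor (x : ℝ) :
    HasDerivAt (fun x : ℝ => x * (4 * x ^ 4 - 5) / (2 * x ^ 2 + 1))
      ((24 * x ^ 6 + 20 * x ^ 4 + 10 * x ^ 2 - 5) / (2 * x ^ 2 + 1) ^ 2) x := by
  have hq : 2 * x ^ 2 + 1 ≠ 0 := by positivity
  have hp := (hasDerivAt_id' x).mul (((hasDerivAt_pow 4 x).const_mul 4).sub_const 5)
  refine (hp.div (((hasDerivAt_pow 2 x).const_mul 2).add_const 1) hq).congr_deriv ?_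
  simp only [Pi.mul_apply]
  field_simp
  ring

lemma hasDerivAt_anharmonic_factor_deriv (x : ℝ) :
    HasDerivAt (fun x : ℝ => (24 * x ^ 6 + 20 * x ^ 4 + 10 * x ^ 2 - 5) / (2 * x ^ 2 + 1) ^ 2)
      (4 * x * (24 * x ^ 6 + 36 * x ^ 4 + 10 * x ^ 2 + 15) / (2 * x ^ 2 + 1) ^ 3) x := by
  have hq : 2 * x ^ 2 + 1 ≠ 0 := by positivity
  have hp := (((hasDerivAt_pow 6 x).const_mul 24).add ((hasDerivAt_pow 4 x).const_mul 20)).add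
    ((hasDerivAt_pow 2 x).const_mul 10) |>.sub_const 5
  refine (hp.div ((((hasDerivAt_pow 2 x).const_mul 2).add_const 1).pow 2)
    (pow_ne_zero 2 hq)).congr_deriv ?_
  simp only [Pi.add_apply, Pi.pow_apply]
  field_simp
  ring

theorem schroedinger_anharmonic_E_9
    (V ψ : ℝ → ℝ)
    (hV : ∀ z, V z = -z^2 - 2 - 8/(2*z^2+1) + 16/(2*z^2+1)^2)
    (hψ : ∀ z, ψ z = Real.exp (-z^2/2) * z * (4*z^4-5) / (2*z^2+1)) :
    ∀ z : ℝ, deriv (deriv ψ) z + (V z + 9) * ψ z = 0 := by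
  intro z
  have hψ_eq : ψ = fun x => exp (-x ^ 2 / 2) * (x * (4 * x ^ 4 - 5) / (2 * x ^ 2 + 1)) :=
    funext fun x => by rw [hψ]; ring
  rw [hψ_eq, deriv_deriv_exp_neg_sq_div_two_mul hasDerivAt_anharmonic_factor
    (hasDerivAt_anharmonic_factor_deriv z), hV]
  have hq : 2 * z ^ 2 + 1 ≠ 0 := by positivity
  field_simp
  ring
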